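/- arXiv:math/0104160 — 2 statements merged into one kernel-verified Lean document; each statement's English description precedes it below -/
import Mathlib

section
/- Let G be a finite group whose center Z(G) = {1, z} has order 2, and suppose G/Z(G) is an elementary abelian 2-group of cardinality 2^{2n} for a positive integer n. Let A be a maximal abelian subgroup of G, and let T be an irreducible complex representation of G on which z acts as the scalar −1. Then z ∈ A, the cardinality of A is 2^{n+1}, and the restriction of T to A is isomorphic to the direct sum, over all group homomorphisms φ : A → ℂ^× with φ(z) = −1, of the one-dimensional representation given by φ, each such φ occurring with multiplicity exactly one. -/
/-!
Since `G ⧸ Z(G)` has exponent 2, every commutator lies in `Z(G) = {1, z}`, so every noncentral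
`g` is conjugate to `z * g`. As `z` acts by `-1`, the character of `T` vanishes off `{1, z}`, and
orthogonality gives `|G| = 2 (dim T)²`, i.e. `dim T = 2 ^ n`.

A maximal abelian subgroup `A` is its own centraliser, so it contains `z`, and `g ↦ ⁅g, ·⁆`
embeds `G ⧸ A` into `Hom(A, Z(G))`, which has at most `|A|` elements as `Z(G)` is cyclic; hence
`|G| ≤ |A|²`. On the other hand the multiplicity of a character `φ` of `A` in `T` is
`2 dim T / |A|` if `φ z = -1` and `0` otherwise. Some multiplicity `r` is positive, and
`r² |A|² = 4 (dim T)² ≤ 2 |A|²` forces `r = 1`. Hence `|A| = 2 dim T` and `T` restricted to `A`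
is the multiplicity-free sum of the characters with `φ z = -1`.
-/

open CategoryTheory Subgroup
open scoped commutatorElement IsMulCommutative

section GroupTheory

variable {G : Type*} [Group G]

theorem commutator_mem_of_sq_eq_one {N : Subgroup G} [N.Normal] (hN : ∀ g : G ⧸ N, g ^ 2 = 1)
    (g h : G) : ⁅g, h⁆ ∈ N := by
  have hcomm := Commute.of_orderOf_dvd_two (fun x => orderOf_dvd_of_pow_eq_one (hN x))
    (g : G ⧸ N) h
  rw [← QuotientGroup.eq_one_iff, commutatorElement_def]
  simp only [QuotientGroup.mk_mul, QuotientGroup.mk_inv, hcomm.eq]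
  group

theorem Subgroup.centralizer_eq_self_of_maximal {A : Subgroup G}
    (hA : Maximal (fun B : Subgroup G => IsMulCommutative B) A) : centralizer A = A := by
  have hAA := @le_centralizer _ _ A hA.1
  refine le_antisymm (fun g hg => ?_) hAA
  have hcomm : ∀ x ∈ insert g (A : Set G), ∀ y ∈ insert g (A : Set G), x * y = y * x := by
    rintro x (rfl | hx) y (rfl | hy)
    · rfl
    · exact (hg y hy).symm
    · exact hg x hx
    · exact hAA hy x hx
  exact hA.2 (isMulCommutative_closure hcomm)
    (fun a ha => subset_closure (Set.mem_insert_of_mem g ha)) (subset_closure (Set.mem_insert g A))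

def commutatorPairing (hG : ∀ g h : G, ⁅g, h⁆ ∈ center G) : G →* (G →* center G) where
  toFun g :=
    { toFun h := ⟨⁅g, h⁆, hG g h⟩
      map_one' := Subtype.ext (commutatorElement_one_right g)
      map_mul' h k := Subtype.ext <| show ⁅g, h * k⁆ = ⁅g, h⁆ * ⁅g, k⁆ by
        rw [commutatorElement_mul_right_eq_mul_conj, mul_assoc _ h,
          mem_center_iff.mp (hG g k) h, ← mul_assoc, mul_inv_cancel_right] }
  map_one' := by ext; simp
  map_mul' g g' := MonoidHom.ext fun h => Subtype.ext <|
    show ⁅g * g', h⁆ = ⁅g, h⁆ * ⁅g', h⁆ by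
      rw [commutatorElement_mul_left_eq_conj_mul, mem_center_iff.mp (hG g' h) g,
        mul_inv_cancel_right, mem_center_iff.mp (hG g' h)]

theorem commutatorPairing_apply (hG : ∀ g h : G, ⁅g, h⁆ ∈ center G) (g h : G) :
    (commutatorPairing hG g h : G) = ⁅g, h⁆ := rfl

theorem ker_compHom'_commutatorPairing (hG : ∀ g h : G, ⁅g, h⁆ ∈ center G) (A : Subgroup G) :
    (A.subtype.compHom'.comp (commutatorPairing hG)).ker = centralizer A := by
  ext g
  simp [MonoidHom.mem_ker, mem_centralizer_iff, DFunLike.ext_iff, Subtype.ext_iff,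
    commutatorPairing_apply, commutatorElement_eq_one_iff_mul_comm, eq_comm]

theorem card_monoidHom_le_card_of_isCyclic {A C : Type*} [CommGroup A] [Finite A] [Group C]
    [Finite C] [IsCyclic C] : Nat.card (A →* C) ≤ Nat.card A := by
  have : NeZero (Nat.card C) := ⟨Nat.card_pos.ne'⟩
  let e : C ≃* rootsOfUnity (Nat.card C) ℂ :=
    mulEquivOfCyclicCardEq (Complex.card_rootsOfUnity _).symm
  calc Nat.card (A →* C) ≤ Nat.card (A →* ℂˣ) :=
        Nat.card_le_card_of_injective
          (fun f => (rootsOfUnity _ ℂ).subtype.comp (e.toMonoidHom.comp f)) fun _ _ h =>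
            MonoidHom.ext fun a => e.injective (Subtype.ext (DFunLike.congr_fun h a))
    _ = Nat.card A := CommGroup.card_monoidHom_of_hasEnoughRootsOfUnity A ℂ

theorem Subgroup.card_le_card_mul_card_of_maximal [Finite G] [IsCyclic (center G)]
    (hG : ∀ g h : G, ⁅g, h⁆ ∈ center G) {A : Subgroup G}
    (hA : Maximal (fun B : Subgroup G => IsMulCommutative B) A) :
    Nat.card G ≤ Nat.card A * Nat.card A := by
  have := hA.1
  have : Finite (A →* center G) := .of_injective _ DFunLike.coe_injective
  set f := A.subtype.compHom'.comp (commutatorPairing hG)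
  have hker : f.ker = A :=
    (ker_compHom'_commutatorPairing hG A).trans (centralizer_eq_self_of_maximal hA)
  calc Nat.card G = Nat.card (G ⧸ f.ker) * Nat.card f.ker :=
        card_eq_card_quotient_mul_card_subgroup _
    _ = Nat.card f.range * Nat.card A := by
      rw [Nat.card_congr (QuotientGroup.quotientKerEquivRange f).toEquiv, hker]
    _ ≤ Nat.card (A →* center G) * Nat.card A := by
      gcongr; exact Nat.card_le_card_of_injective _ Subtype.val_injective
    _ ≤ Nat.card A * Nat.card A := by gcongr; exact card_monoidHom_le_card_of_isCyclic

theorem exists_conj_eq_mul_of_notMem_center {z g : G} (hZ : (center G : Set G) = {1, z})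
    (hG : ∀ g h : G, ⁅g, h⁆ ∈ center G) (hg : g ∉ center G) : ∃ x, x * g * x⁻¹ = z * g := by
  obtain ⟨x, hx⟩ := not_forall.mp (mt mem_center_iff.mpr hg)
  have hxg : ⁅x, g⁆ ∈ (center G : Set G) := hG x g
  rcases hZ ▸ hxg with h | h
  · exact absurd (commutatorElement_eq_one_iff_mul_comm.mp h) hx
  · exact ⟨x, by rw [← Set.mem_singleton_iff.mp h, commutatorElement_def, inv_mul_cancel_right]⟩

end GroupTheory

namespace FDRep

variable {k G : Type*} [Field k] [Group G]

theorem character_eq_zero_of_conj_eq_mul [NeZero (2 : k)] (V : FDRep k G) {x g z : G}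
    (hz : V.ρ z = -1) (h : x * g * x⁻¹ = z * g) : V.character g = 0 := by
  have hneg : -V.character g = V.character g := by
    simpa only [h, character, map_mul, hz, neg_one_mul, map_neg] using char_conj V g x
  have h2 : (2 : k) * V.character g = 0 := by linear_combination -hneg
  exact (mul_eq_zero.mp h2).resolve_left two_ne_zero

theorem character_eq_zero_of_ne [NeZero (2 : k)] {z : G} (hZ : (center G : Set G) = {1, z})
    (hG : ∀ g h : G, ⁅g, h⁆ ∈ center G) (V : FDRep k G) (hz : V.ρ z = -1) (g : G) (hg1 : g ≠ 1)
    (hgz : g ≠ z) : V.character g = 0 := by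
  have hg : g ∉ center G := by simp [← SetLike.mem_coe, hZ, hg1, hgz]
  obtain ⟨x, hx⟩ := exists_conj_eq_mul_of_notMem_center hZ hG hg
  exact V.character_eq_zero_of_conj_eq_mul hz hx

theorem card_eq_two_mul_finrank_sq [IsAlgClosed k] [CharZero k] [Fintype G] (V : FDRep k G)
    [Simple V] {z : G} (hz : z ≠ 1) (hVz : V.ρ z = -1)
    (hV : ∀ g, g ≠ 1 → g ≠ z → V.character g = 0) :
    Nat.card G = 2 * Module.finrank k V ^ 2 := by
  have : Invertible (Nat.card G : k) :=
    invertibleOfNonzero (Nat.cast_ne_zero.mpr Nat.card_pos.ne')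
  have hVz' : V.ρ z⁻¹ = -1 := by
    calc V.ρ z⁻¹ = V.ρ z⁻¹ * (V.ρ z * V.ρ z) := by simp [hVz]
      _ = -1 := by rw [← mul_assoc, ← map_mul, inv_mul_cancel, map_one, one_mul, hVz]
  have horth := char_orthonormal V V
  rw [if_pos ⟨Iso.refl V⟩, Fintype.sum_eq_add 1 z hz.symm
    (fun g hg => by rw [hV g hg.1 hg.2, zero_mul])] at horth
  simp only [inv_one, character, map_one, hVz, hVz', map_neg, LinearMap.trace_one] at horth
  have : (Nat.card G : k) = 2 * (Module.finrank k V : k) ^ 2 := by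
    field_simp at horth
    rw [← horth]; ring
  exact_mod_cast this

end FDRep

namespace Representation

section Group

variable {k A V : Type*} [Field k] [Group A] [Fintype A] [AddCommGroup V] [Module k V]
  (ρ : Representation k A V)

noncomputable def isotypicProj (φ : A →* kˣ) : Module.End k V :=
  (Fintype.card A : k)⁻¹ • ∑ a, (φ a⁻¹ : k) • ρ a

theorem apply_mul_isotypicProj (φ : A →* kˣ) (b : A) :
    ρ b * ρ.isotypicProj φ = (φ b : k) • ρ.isotypicProj φ := by
  rw [isotypicProj, mul_smul_comm, smul_comm (φ b : k) (Fintype.card A : k)⁻¹]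
  congr 1
  rw [Finset.mul_sum, Finset.smul_sum]
  refine Fintype.sum_equiv (Equiv.mulLeft b) (fun a => ρ b * ((φ a⁻¹ : k) • ρ a))
    (fun a => (φ b : k) • (φ a⁻¹ : k) • ρ a) fun a => ?_
  simp only [Equiv.coe_mulLeft, mul_inv_rev, map_mul, map_inv, smul_smul, Units.val_mul,
    mul_smul_comm]
  rw [mul_left_comm, Units.mul_inv, mul_one]

open scoped Classical in
theorem isotypicProj_mul_isotypicProj [NeZero (Fintype.card A : k)] (φ ψ : A →* kˣ) :
    ρ.isotypicProj φ * ρ.isotypicProj ψ = if φ = ψ then ρ.isotypicProj ψ else 0 := by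
  have horth : ∑ a, (φ a⁻¹ : k) * ψ a = if φ = ψ then (Fintype.card A : k) else 0 := by
    have h1 : (Units.coeHom k).comp (φ⁻¹ * ψ) = 1 ↔ φ = ψ := by
      simp [DFunLike.ext_iff, inv_mul_eq_one₀, Units.ext_iff]
    simpa [h1] using sum_hom_units ((Units.coeHom k).comp (φ⁻¹ * ψ))
  set e := ρ.isotypicProj ψ
  calc ρ.isotypicProj φ * e = (Fintype.card A : k)⁻¹ • ∑ a, (φ a⁻¹ : k) • (ρ a * e) := by
        rw [isotypicProj, smul_mul_assoc, Finset.sum_mul]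
        simp_rw [smul_mul_assoc]
    _ = ((Fintype.card A : k)⁻¹ * ∑ a, (φ a⁻¹ : k) * ψ a) • e := by
        simp_rw [e, apply_mul_isotypicProj, smul_smul, ← Finset.sum_smul, mul_smul]
    _ = _ := by rw [horth]; split_ifs <;> simp [inv_mul_cancel₀ (NeZero.ne _)]

theorem isotypicProj_eq_zero_of_apply_ne {a : A} {c : kˣ} (ha : ρ a = (c : k) • 1)
    {φ : A →* kˣ} (hφ : φ a ≠ c) : ρ.isotypicProj φ = 0 := by
  have h : ((φ a : k) - c) • ρ.isotypicProj φ = 0 := by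
    rw [sub_smul, ← apply_mul_isotypicProj, ha, smul_mul_assoc, one_mul, sub_self]
  exact (smul_eq_zero.mp h).resolve_left (sub_ne_zero.mpr (Units.val_injective.ne hφ))

theorem finrank_range_isotypicProj [NeZero (Fintype.card A : k)] [FiniteDimensional k V]
    (φ : A →* kˣ) : (Module.finrank k (ρ.isotypicProj φ).range : k) =
      (Fintype.card A : k)⁻¹ * ∑ a, (φ a⁻¹ : k) * LinearMap.trace k V (ρ a) := by
  have hidem : IsIdempotentElem (ρ.isotypicProj φ) := by
    unfold IsIdempotentElem
    simpa using ρ.isotypicProj_mul_isotypicProj φ φ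
  rw [← ((LinearMap.isProj_range_iff_isIdempotentElem _).mpr hidem).trace]
  simp [isotypicProj, map_sum]

theorem finrank_range_isotypicProj_mul_card [CharZero k] [FiniteDimensional k V] {z : A}
    (hz : z ≠ 1) (hρz : ρ z = -1) (hχ : ∀ a, a ≠ 1 → a ≠ z → LinearMap.trace k V (ρ a) = 0)
    {φ : A →* kˣ} (hφ : φ z = -1) :
    Module.finrank k (ρ.isotypicProj φ).range * Fintype.card A = 2 * Module.finrank k V := by
  have h := ρ.finrank_range_isotypicProj φ
  rw [Fintype.sum_eq_add 1 z hz.symm (fun a ha => by rw [hχ a ha.1 ha.2, mul_zero])] at h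
  simp only [inv_one, map_one, Units.val_one, LinearMap.trace_one, one_mul, map_inv, hφ, inv_neg,
    Units.val_neg, hρz, map_neg, mul_neg, neg_mul, neg_neg] at h
  have : (Module.finrank k (ρ.isotypicProj φ).range : k) * Fintype.card A =
      2 * Module.finrank k V := by
    field_simp at h
    linear_combination h
  exact_mod_cast this

end Group

section CommGroup

variable {k A V : Type*} [Field k] [CommGroup A] [Fintype A] [AddCommGroup V] [Module k V]
  (ρ : Representation k A V) [HasEnoughRootsOfUnity k (Monoid.exponent A)]

theorem sum_isotypicProj [NeZero (Fintype.card A : k)] [Fintype (A →* kˣ)] :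
    ∑ φ, ρ.isotypicProj φ = 1 := by
  classical
  have hdual (a : A) :
      ∑ φ : A →* kˣ, (φ a⁻¹ : k) = if a = 1 then (Fintype.card A : k) else 0 := by
    have h1 : (Units.coeHom k).comp (MonoidHom.eval a⁻¹) = 1 ↔ a = 1 := by
      simp [DFunLike.ext_iff, ← inv_eq_one (a := a),
        ← CommGroup.forall_apply_eq_apply_iff A (M := k)]
    have hcard : Fintype.card (A →* kˣ) = Fintype.card A := by
      simpa [Nat.card_eq_fintype_card] using
        CommGroup.card_monoidHom_of_hasEnoughRootsOfUnity A k
    have h := sum_hom_units ((Units.coeHom k).comp (MonoidHom.eval a⁻¹))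
    simp only [h1, hcard, Nat.cast_ite, Nat.cast_zero] at h
    exact h
  simp_rw [isotypicProj, ← Finset.smul_sum]
  rw [Finset.sum_comm]
  simp_rw [← Finset.sum_smul, hdual, ite_smul, zero_smul, Finset.sum_ite_eq', Finset.mem_univ,
    if_true, map_one, smul_smul, inv_mul_cancel₀ (NeZero.ne _), one_smul]

theorem exists_basis_of_finrank_range_isotypicProj [NeZero (Fintype.card A : k)]
    [FiniteDimensional k V] (P : (A →* kˣ) → Prop)
    (h1 : ∀ φ, P φ → Module.finrank k (ρ.isotypicProj φ).range = 1)
    (h0 : ∀ φ, ¬ P φ → ρ.isotypicProj φ = 0) :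
    ∃ b : Module.Basis {φ // P φ} k V, ∀ φ a, ρ a (b φ) = (φ.1 a : k) • b φ := by
  classical
  have := Fintype.ofFinite (A →* kˣ)
  choose v hv0 hspan using fun φ : {φ // P φ} => finrank_eq_one_iff'.mp (h1 φ φ.2)
  have hproj (φ ψ : {φ // P φ}) : ρ.isotypicProj ψ (v φ) = if φ = ψ then (v φ : V) else 0 := by
    obtain ⟨x, hx⟩ := (v φ).2
    rw [← hx, ← Module.End.mul_apply, isotypicProj_mul_isotypicProj]
    simp_rw [eq_comm (a := φ), ← Subtype.ext_iff]
    split_ifs <;> rfl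
  have hli : LinearIndependent k (fun φ => (v φ : V)) := by
    rw [Fintype.linearIndependent_iff]
    intro c hc ψ
    have h := congrArg (ρ.isotypicProj ψ) hc
    simp only [map_sum, map_smul, map_zero, hproj, smul_ite, smul_zero, Finset.sum_ite_eq',
      Finset.mem_univ, if_true] at h
    exact (smul_eq_zero.mp h).resolve_right (by simpa using hv0 ψ)
  have hsp : ⊤ ≤ Submodule.span k (Set.range fun φ => (v φ : V)) := by
    intro x _
    have hx : x = ∑ φ, ρ.isotypicProj φ x := by
      rw [← LinearMap.sum_apply, ρ.sum_isotypicProj, Module.End.one_apply]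
    rw [hx]
    refine Submodule.sum_mem _ fun φ _ => ?_
    by_cases hφ : P φ
    · obtain ⟨c, hc⟩ := hspan ⟨φ, hφ⟩ ⟨_, LinearMap.mem_range_self _ x⟩
      rw [show ρ.isotypicProj φ x = c • (v ⟨φ, hφ⟩ : V) from
        (congrArg Subtype.val hc).symm]
      exact Submodule.smul_mem _ _ (Submodule.subset_span ⟨⟨φ, hφ⟩, rfl⟩)
    · rw [h0 φ hφ, LinearMap.zero_apply]
      exact zero_mem _
  refine ⟨Module.Basis.mk hli hsp, fun φ a => ?_⟩
  have hfix := hproj φ φ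
  rw [if_pos rfl] at hfix
  rw [Module.Basis.mk_apply]
  conv_lhs => rw [← hfix]
  rw [← Module.End.mul_apply, apply_mul_isotypicProj, LinearMap.smul_apply, hfix]

theorem card_eq_two_mul_finrank [CharZero k] [FiniteDimensional k V] [Nontrivial V] {z : A}
    (hz : z ≠ 1) (hρz : ρ z = -1) (hχ : ∀ a, a ≠ 1 → a ≠ z → LinearMap.trace k V (ρ a) = 0)
    (hcard : 2 * Module.finrank k V ^ 2 ≤ Fintype.card A ^ 2) :
    Fintype.card A = 2 * Module.finrank k V := by
  classical
  have := Fintype.ofFinite (A →* kˣ)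
  obtain ⟨φ, hφ⟩ : ∃ φ, ρ.isotypicProj φ ≠ 0 := by
    by_contra! h
    simpa [h] using ρ.sum_isotypicProj
  have hφz : φ z = -1 := by
    by_contra h
    exact hφ (ρ.isotypicProj_eq_zero_of_apply_ne (c := -1) (by simp [hρz]) h)
  have hr := ρ.finrank_range_isotypicProj_mul_card hz hρz hχ hφz
  have hr0 : Module.finrank k (ρ.isotypicProj φ).range ≠ 0 := by
    rwa [Ne, Submodule.finrank_eq_zero, LinearMap.range_eq_bot]
  have hm := Fintype.card_pos (α := A)
  have hr1 : Module.finrank k (ρ.isotypicProj φ).range = 1 := by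
    have : Module.finrank k (ρ.isotypicProj φ).range ^ 2 ≤ 2 := by
      refine le_of_mul_le_mul_right ?_ (pow_pos hm 2)
      nlinarith
    have : Module.finrank k (ρ.isotypicProj φ).range ≤ 1 := by nlinarith
    omega
  rw [← hr, hr1, one_mul]

theorem exists_eigenbasis_of_trace_eq_zero [CharZero k] [FiniteDimensional k V] [Nontrivial V]
    {z : A} (hz : z ≠ 1) (hρz : ρ z = -1)
    (hχ : ∀ a, a ≠ 1 → a ≠ z → LinearMap.trace k V (ρ a) = 0)
    (hcard : 2 * Module.finrank k V ^ 2 ≤ Fintype.card A ^ 2) (P : (A →* kˣ) → Prop)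
    (hP : ∀ φ, P φ ↔ φ z = -1) :
    ∃ b : Module.Basis {φ // P φ} k V, ∀ φ a, ρ a (b φ) = (φ.1 a : k) • b φ := by
  refine ρ.exists_basis_of_finrank_range_isotypicProj P (fun φ hφ => ?_) fun φ hφ =>
    ρ.isotypicProj_eq_zero_of_apply_ne (c := -1) (by simp [hρz]) ((hP φ).not.mp hφ)
  have hr := ρ.finrank_range_isotypicProj_mul_card hz hρz hχ ((hP φ).mp hφ)
  rw [← ρ.card_eq_two_mul_finrank hz hρz hχ hcard] at hr
  exact Nat.eq_of_mul_eq_mul_right Fintype.card_pos (hr.trans (one_mul _).symm)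

end CommGroup

end Representation

theorem restriction_to_maximal_abelian_general (n : ℕ)
    (G : Type) [Group G] [Finite G]
    (z : G) (hz : z ≠ 1)
    (hZ : (Subgroup.center G : Set G) = {1, z})
    (helem : ∀ g : G ⧸ Subgroup.center G, g ^ 2 = 1)
    (hcard : Nat.card (G ⧸ Subgroup.center G) = 2 ^ (2 * n))
    (A : Subgroup G)
    (hAcomm : ∀ a ∈ A, ∀ b ∈ A, a * b = b * a)
    (hAmax : ∀ B : Subgroup G, (∀ a ∈ B, ∀ b ∈ B, a * b = b * a) → A ≤ B → B = A)
    (T : FDRep ℂ G) (hT : Simple T) (hTz : T.ρ z = -1) :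
    z ∈ A ∧ Nat.card A = 2 ^ (n + 1) ∧
      ∃ b : Module.Basis {φ : A →* ℂˣ // ∀ a : A, (a : G) = z → φ a = -1} ℂ T,
        ∀ φ (a : A), T.ρ (a : G) (b φ) = ((φ.val a : ℂˣ) : ℂ) • b φ := by
  have := Fintype.ofFinite G
  have hG : ∀ g h : G, ⁅g, h⁆ ∈ center G := commutator_mem_of_sq_eq_one helem
  have hcardZ : Nat.card (center G) = 2 := by
    rw [← SetLike.coe_sort_coe, hZ, Nat.card_coe_set_eq, Set.ncard_pair hz.symm]
  have : IsCyclic (center G) := isCyclic_of_prime_card hcardZ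
  have hAmax' : Maximal (fun B : Subgroup G => IsMulCommutative B) A :=
    ⟨isMulCommutative_iff.mpr fun a b => Subtype.ext (hAcomm a a.2 b b.2), fun B hB hAB =>
      (hAmax B (fun a ha b hb => congrArg Subtype.val (mul_comm' (⟨a, ha⟩ : B) ⟨b, hb⟩)) hAB).le⟩
  have hzA : z ∈ A := centralizer_eq_self_of_maximal hAmax' ▸
    center_le_centralizer (A : Set G) (by simp [← SetLike.mem_coe, hZ])
  have hχ := FDRep.character_eq_zero_of_ne hZ hG T hTz
  have hGd := T.card_eq_two_mul_finrank_sq hz hTz hχ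
  have hd : Module.finrank ℂ T = 2 ^ n := by
    rw [card_eq_card_quotient_mul_card_subgroup (center G), hcard, hcardZ] at hGd
    exact Nat.pow_left_injective two_ne_zero
      (show _ ^ 2 = (2 ^ n) ^ 2 by rw [← pow_mul, mul_comm n]; linarith)
  have := hAmax'.1
  have := Fintype.ofFinite A
  have : Nontrivial T := Module.nontrivial_of_finrank_pos (by rw [hd]; positivity)
  let ρ : Representation ℂ A T := T.ρ.comp A.subtype
  have hzA1 : (⟨z, hzA⟩ : A) ≠ 1 := fun h => hz (congrArg Subtype.val h)
  have hρχ (a : A) (h1 : a ≠ 1) (hza : a ≠ ⟨z, hzA⟩) : LinearMap.trace ℂ T (ρ a) = 0 :=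
    hχ a (fun h => h1 (Subtype.ext h)) (fun h => hza (Subtype.ext h))
  have hAcard : 2 * Module.finrank ℂ T ^ 2 ≤ Fintype.card A ^ 2 := by
    rw [← hGd, ← Nat.card_eq_fintype_card, sq]
    exact card_le_card_mul_card_of_maximal hG hAmax'
  refine ⟨hzA, ?_, ρ.exists_eigenbasis_of_trace_eq_zero hzA1 hTz hρχ hAcard _ fun φ =>
    ⟨fun h => h _ rfl, fun h a ha => (congrArg φ (Subtype.ext ha)).trans h⟩⟩
  rw [Nat.card_eq_fintype_card, ρ.card_eq_two_mul_finrank hzA1 hTz hρχ hAcard, hd, pow_succ']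

/-- Let `G` be a finite group whose center is `{1, z}` of order 2, with `G/Z(G)` an
elementary abelian 2-group of cardinality `2^(2n)`, `n ≥ 1`.  Let `A` be a maximal abelian
subgroup of `G` and `T` an irreducible complex representation of `G` on which `z` acts as
`-1`.  Then `z ∈ A`, `|A| = 2^(n+1)`, and the restriction of `T` to `A` decomposes as the
direct sum of the one-dimensional representations given by the characters `φ : A → ℂˣ`
with `φ(z) = -1`, each occurring with multiplicity exactly one.  (The decomposition is
expressed by a basis of `T` indexed by such characters, each basis vector spanning the
corresponding one-dimensional `A`-subrepresentation.) -/
theorem restriction_to_maximal_abelian (n : ℕ) (hn : 0 < n)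
    (G : Type) [Group G] [Finite G]
    (z : G) (hz : z ≠ 1)
    (hZ : (Subgroup.center G : Set G) = {1, z})
    (helem : ∀ g : G ⧸ Subgroup.center G, g ^ 2 = 1)
    (hcard : Nat.card (G ⧸ Subgroup.center G) = 2 ^ (2 * n))
    (A : Subgroup G)
    (hAcomm : ∀ a ∈ A, ∀ b ∈ A, a * b = b * a)
    (hAmax : ∀ B : Subgroup G, (∀ a ∈ B, ∀ b ∈ B, a * b = b * a) → A ≤ B → B = A)
    (T : FDRep ℂ G) (hT : Simple T) (hTz : T.ρ z = -1) :
    z ∈ A ∧ Nat.card A = 2 ^ (n + 1) ∧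
      ∃ b : Module.Basis {φ : A →* ℂˣ // ∀ a : A, (a : G) = z → φ a = -1} ℂ T,
        ∀ φ (a : A), T.ρ (a : G) (b φ) = ((φ.val a : ℂˣ) : ℂ) • b φ :=
  restriction_to_maximal_abelian_general n G z hz hZ helem hcard A hAcomm hAmax T hT hTz
end

section
/- Let k be a positive integer, let Λ be a positive-definite even unimodular lattice of rank 24 without roots, let S = (x_1, …, x_24) be a 2k-frame of Λ with associated code C(S) ⊆ (ℤ/2kℤ)^24. Then for every real number q with 0 < q < 1, all the sums below converge absolutely and Σ_{λ∈Λ} q^{⟨λ,λ⟩/2} = Σ_{c∈C(S)} Π_{i=1}^{24} ( Σ_{j∈ℤ} q^{(2kj + c̃_i)²/(4k)} ), where c̃_i ∈ ℤ is any integer lift of the i-th coordinate c_i of c (the inner sum does not depend on the choice of lift). -/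
/-!
Pairing with the frame vectors embeds `Λ` into `ℤ²⁴`: a vector orthogonal to the whole frame
would give 25 pairwise orthogonal vectors of nonzero norm in a lattice of rank 24. Since
`2k • λ = ∑ ⟨λ, xᵢ⟩ • xᵢ`, the norm is `⟨λ, λ⟩ / 2 = ∑ ⟨λ, xᵢ⟩² / 4k`, so each theta term
factors over the coordinates. The image of the embedding contains `2k ℤ²⁴`, hence it is exactly
the set of integer vectors whose reduction lies in `C(S)`, and each such vector is uniquely
`2k • b + c̃` with `c̃` the canonical lift of a codeword. Summing the product over `b ∈ ℤ²⁴`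
coordinatewise gives the right-hand side (first in `ℝ≥0∞`, where no convergence is needed).
-/

open scoped ENNReal

theorem summable_rpow_intCast_sq_div {q c : ℝ} (hq0 : 0 < q) (hq1 : q < 1) (hc : 0 < c) :
    Summable fun t : ℤ => q ^ ((t : ℝ) ^ 2 / c) := by
  have hnat : Summable fun n : ℕ => q ^ ((n : ℝ) ^ 2 / c) := by
    refine (summable_geometric_of_lt_one (by positivity)
      (Real.rpow_lt_one hq0.le hq1 (one_div_pos.mpr hc))).of_nonneg_of_le
      (fun n => by positivity) fun n => ?_
    rw [← Real.rpow_natCast (q ^ (1 / c)) n, ← Real.rpow_mul hq0.le, one_div_mul_eq_div]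
    refine Real.rpow_le_rpow_of_exponent_ge hq0 hq1.le ?_
    gcongr
    exact_mod_cast Nat.le_self_pow two_ne_zero n
  exact summable_int_iff_summable_nat_and_neg.mpr ⟨by simpa using hnat, by simpa using hnat⟩

theorem tsum_comp_mul_add_of_modEq {α : Type*} [AddCommMonoid α] [TopologicalSpace α]
    (f : ℤ → α) {n a b : ℤ} (h : a ≡ b [ZMOD n]) :
    ∑' j, f (n * j + a) = ∑' j, f (n * j + b) := by
  obtain ⟨t, ht⟩ := h.dvd
  rw [← (Equiv.addRight t).tsum_eq]
  refine tsum_congr fun j => congrArg f ?_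
  simp only [Equiv.coe_addRight]
  linear_combination -ht

theorem hasSum_of_tsum_ofReal_eq {α : Type*} {f : α → ℝ} (hf : ∀ a, 0 ≤ f a) {r : ℝ}
    (hr : 0 ≤ r) (h : ∑' a, ENNReal.ofReal (f a) = ENNReal.ofReal r) : HasSum f r := by
  have hs : Summable f := (ENNReal.summable_toReal (h ▸ ENNReal.ofReal_ne_top)).congr
    fun a => ENNReal.toReal_ofReal (hf a)
  rw [hs.hasSum_iff, ← ENNReal.ofReal_eq_ofReal_iff (tsum_nonneg hf) hr,
    ENNReal.ofReal_tsum_of_nonneg hf hs, h]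

theorem ENNReal.tsum_pi_prod {ι κ : Type*} [Fintype ι] (f : ι → κ → ℝ≥0∞) :
    ∑' v : ι → κ, ∏ i, f i (v i) = ∏ i, ∑' j, f i j := by
  revert f
  refine Fintype.induction_empty_option (P := fun ι _ => ∀ f : ι → κ → ℝ≥0∞,
    ∑' v : ι → κ, ∏ i, f i (v i) = ∏ i, ∑' j, f i j) ?_ ?_ ?_ ι
  · intro α β _ e ih f
    let _ := Fintype.ofEquiv β e.symm
    rw [← Fintype.prod_equiv e _ _ fun _ => rfl, ← ih (fun a => f (e a)),
      ← (e.arrowCongr (Equiv.refl κ)).tsum_eq]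
    exact tsum_congr fun w => (Fintype.prod_equiv e _ _ fun a => by simp).symm
  · intro f
    simp
  · intro α _ ih f
    rw [← Equiv.piOptionEquivProd.symm.tsum_eq, ENNReal.tsum_prod', Fintype.prod_option,
      ← ih (fun a => f (some a)), ← ENNReal.tsum_mul_right]
    refine tsum_congr fun j => ?_
    simp [Fintype.prod_option, ENNReal.tsum_mul_left]

def modLiftEquiv {ι : Type*} {n : ℕ} [NeZero n] (C : Set (ι → ZMod n)) :
    C × (ι → ℤ) ≃ {v : ι → ℤ | (fun i => (v i : ZMod n)) ∈ C} where
  toFun p := ⟨fun i => n * p.2 i + (p.1.1 i).val, by simp [p.1.2]⟩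
  invFun v := (⟨_, v.2⟩, fun i => v.1 i / n)
  left_inv p := by
    ext i
    · simp
    · change (n * p.2 i + ((p.1.1 i).val : ℤ)) / n = p.2 i
      rw [add_comm, Int.add_mul_ediv_left _ _ (Int.natCast_ne_zero.mpr (NeZero.ne n)),
        Int.ediv_eq_zero_of_lt (by positivity) (by exact_mod_cast (p.1.1 i).val_lt), zero_add]
  right_inv v := by
    ext i
    change n * (v.1 i / n) + ((v.1 i : ZMod n).val : ℤ) = v.1 i
    rw [ZMod.val_intCast, Int.mul_ediv_add_emod]

theorem LinearMap.linearIndependent_of_pairwise_apply_eq_zero {R M ι : Type*} [CommRing R]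
    [IsDomain R] [AddCommGroup M] [Module R M] (B : M →ₗ[R] M →ₗ[R] R) {v : ι → M}
    (horth : Pairwise fun i j => B (v i) (v j) = 0) (hnorm : ∀ i, B (v i) (v i) ≠ 0) :
    LinearIndependent R v := by
  rw [linearIndependent_iff']
  intro s w hs i hi
  have hsum : ∑ j ∈ s, w j * B (v j) (v i) = w i * B (v i) (v i) :=
    Finset.sum_eq_single_of_mem i hi fun j _ hji => by rw [horth hji, mul_zero]
  have h := congrArg (fun y => B y (v i)) hs
  simp only [map_sum, map_smul, LinearMap.coe_sum, Finset.sum_apply, LinearMap.smul_apply,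
    smul_eq_mul, map_zero, LinearMap.zero_apply, hsum] at h
  exact (mul_eq_zero.mp h).resolve_right (hnorm i)

section Frame

variable {Λ ι : Type*} [AddCommGroup Λ] [Module ℤ Λ]

def IsFrame [DecidableEq ι] (B : Λ →ₗ[ℤ] Λ →ₗ[ℤ] ℤ) (x : ι → Λ) (m : ℤ) : Prop :=
  ∀ i j, B (x i) (x j) = if i = j then m else 0

def frameCoords (B : Λ →ₗ[ℤ] Λ →ₗ[ℤ] ℤ) (x : ι → Λ) : Λ →ₗ[ℤ] ι → ℤ :=
  LinearMap.pi fun i => B.flip (x i)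

@[simp]
theorem frameCoords_apply (B : Λ →ₗ[ℤ] Λ →ₗ[ℤ] ℤ) (x : ι → Λ) (l : Λ) (i : ι) :
    frameCoords B x l i = B l (x i) := rfl

def frameCode (B : Λ →ₗ[ℤ] Λ →ₗ[ℤ] ℤ) (x : ι → Λ) (n : ℕ) : Set (ι → ZMod n) :=
  Set.range fun l i => (B l (x i) : ZMod n)

variable [Fintype ι] [DecidableEq ι] {B : Λ →ₗ[ℤ] Λ →ₗ[ℤ] ℤ} {x : ι → Λ} {m : ℤ}

namespace IsFrame

theorem frameCoords_sum_smul (hx : IsFrame B x m) (b : ι → ℤ) :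
    frameCoords B x (∑ j, b j • x j) = m • b := by
  ext i
  simp [hx _ i, mul_comm]

theorem frameCoords_injective [Module.Finite ℤ Λ] (hx : IsFrame B x m) (hm : m ≠ 0)
    (hsymm : ∀ a b, B a b = B b a) (hpos : ∀ a, a ≠ 0 → 0 < B a a)
    (hrank : Module.finrank ℤ Λ ≤ Fintype.card ι) : Function.Injective (frameCoords B x) := by
  refine (injective_iff_map_eq_zero _).mpr fun l hl => by_contra fun hl0 => ?_
  have hli : LinearIndependent ℤ fun o : Option ι => o.elim l x := by
    refine B.linearIndependent_of_pairwise_apply_eq_zero ?_ ?_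
    · rintro (_ | i) (_ | j) hij
      · exact absurd rfl hij
      · exact congrFun hl j
      · exact (hsymm _ _).trans (congrFun hl i)
      · exact (hx i j).trans (if_neg fun h => hij (congrArg some h))
    · rintro (_ | i)
      · exact (hpos l hl0).ne'
      · simpa [hx i i] using hm
  have := hli.fintype_card_le_finrank
  rw [Fintype.card_option] at this
  omega

theorem smul_eq_sum (hx : IsFrame B x m) (hinj : Function.Injective (frameCoords B x)) (l : Λ) :
    m • l = ∑ i, B l (x i) • x i :=
  hinj (by rw [hx.frameCoords_sum_smul, map_zsmul]; rfl)

theorem mul_apply_self (hx : IsFrame B x m) (hinj : Function.Injective (frameCoords B x))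
    (hsymm : ∀ a b, B a b = B b a) (l : Λ) : m * B l l = ∑ i, B l (x i) ^ 2 :=
  calc m * B l l = B (m • l) l := by simp
    _ = ∑ i, B l (x i) ^ 2 := by simp [hx.smul_eq_sum hinj, hsymm _ l, sq]

theorem rpow_div_two_apply_self {q : ℝ} (hq : 0 < q) (hx : IsFrame B x m) (hm : m ≠ 0)
    (hinj : Function.Injective (frameCoords B x)) (hsymm : ∀ a b, B a b = B b a) (l : Λ) :
    q ^ ((B l l : ℝ) / 2) = ∏ i, q ^ ((B l (x i) : ℝ) ^ 2 / (2 * m)) := by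
  have h : (m : ℝ) * B l l = ∑ i, (B l (x i) : ℝ) ^ 2 := by
    exact_mod_cast hx.mul_apply_self hinj hsymm l
  rw [← Real.rpow_sum_of_pos hq, ← Finset.sum_div, ← h]
  field_simp

theorem range_frameCoords {n : ℕ} (hx : IsFrame B x n) :
    Set.range (frameCoords B x) = {v | (fun i => (v i : ZMod n)) ∈ frameCode B x n} := by
  ext v
  refine ⟨fun ⟨l, hl⟩ => ⟨l, hl ▸ rfl⟩, fun ⟨l, hl⟩ => ?_⟩
  have hdvd : ∀ i, ∃ b : ℤ, v i - B l (x i) = n * b := fun i =>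
    (ZMod.intCast_eq_intCast_iff_dvd_sub _ _ _).mp (congrFun hl i)
  choose b hb using hdvd
  refine ⟨l + ∑ j, b j • x j, ?_⟩
  rw [map_add, hx.frameCoords_sum_smul]
  ext i
  simp only [Pi.add_apply, Pi.smul_apply, frameCoords_apply, smul_eq_mul]
  linarith [hb i]

theorem tsum_prod_apply_eq_tsum_frameCode {n : ℕ} [NeZero n] (hx : IsFrame B x n)
    (hinj : Function.Injective (frameCoords B x)) (H : ι → ℤ → ℝ≥0∞) :
    ∑' l, ∏ i, H i (B l (x i))
      = ∑' c : frameCode B x n, ∏ i, ∑' j : ℤ, H i (n * j + (c.1 i).val) := by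
  let G : (ι → ℤ) → ℝ≥0∞ := fun v => ∏ i, H i (v i)
  calc ∑' l, ∏ i, H i (B l (x i))
      = ∑' v : Set.range (frameCoords B x), G v := (tsum_range G hinj).symm
    _ = ∑' v : {v : ι → ℤ | (fun i => (v i : ZMod n)) ∈ frameCode B x n}, G v := by
      rw [hx.range_frameCoords]
    _ = ∑' p, G (modLiftEquiv (frameCode B x n) p) := ((modLiftEquiv _).tsum_eq _).symm
    _ = _ := by
      rw [ENNReal.tsum_prod']
      exact tsum_congr fun c => ENNReal.tsum_pi_prod fun i j => H i (n * j + (c.1 i).val)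

theorem hasSum_prod_apply {n : ℕ} [NeZero n] (hx : IsFrame B x n)
    (hinj : Function.Injective (frameCoords B x)) (θ : ι → ℤ → ℝ) (hθ : ∀ i t, 0 ≤ θ i t)
    (hsum : ∀ i a, Summable fun j : ℤ => θ i (n * j + a)) :
    HasSum (fun l => ∏ i, θ i (B l (x i)))
      (∑' c : frameCode B x n, ∏ i, ∑' j : ℤ, θ i (n * j + (c.1 i).val)) := by
  refine hasSum_of_tsum_ofReal_eq (fun l => Finset.prod_nonneg fun i _ => hθ i _)
    (tsum_nonneg fun c => Finset.prod_nonneg fun i _ => tsum_nonneg fun j => hθ i _) ?_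
  rw [ENNReal.ofReal_tsum_of_nonneg
    (fun c => Finset.prod_nonneg fun i _ => tsum_nonneg fun j => hθ i _) (Summable.of_finite)]
  simp_rw [ENNReal.ofReal_prod_of_nonneg fun i _ => hθ i _,
    ENNReal.ofReal_prod_of_nonneg fun i _ => tsum_nonneg fun j => hθ i _,
    ENNReal.ofReal_tsum_of_nonneg (fun j => hθ _ _) (hsum _ _)]
  exact hx.tsum_prod_apply_eq_tsum_frameCode hinj fun i t => ENNReal.ofReal (θ i t)

end IsFrame

end Frame
theorem theta_series_eq_code_sum_general (k : ℕ) (hk : 0 < k)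
    (Λ : Type) [AddCommGroup Λ] [Module ℤ Λ]
    (hfree : Module.Free ℤ Λ) (hrank : Module.finrank ℤ Λ = 24)
    (B : Λ →ₗ[ℤ] Λ →ₗ[ℤ] ℤ)
    (hsymm : ∀ a b : Λ, B a b = B b a)
    (hpos : ∀ a : Λ, a ≠ 0 → 0 < B a a)
    (x : Fin 24 → Λ)
    (hframe : ∀ i j, B (x i) (x j) = if i = j then (2 * (k : ℤ)) else 0)
    (q : ℝ) (hq0 : 0 < q) (hq1 : q < 1) :
    -- the theta series of `Λ` converges absolutely
    Summable (fun l : Λ => q ^ ((B l l : ℝ) / 2)) ∧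
    -- each one-dimensional theta series converges absolutely
    (∀ a : ℤ, Summable (fun j : ℤ =>
        q ^ ((((2 * (k : ℤ) * j + a : ℤ) : ℝ) ^ 2) / (4 * (k : ℝ))))) ∧
    -- the one-dimensional theta series do not depend on the choice of integer lift
    (∀ (m : ZMod (2 * k)) (a b : ℤ), (a : ZMod (2 * k)) = m → (b : ZMod (2 * k)) = m →
        (∑' j : ℤ, q ^ ((((2 * (k : ℤ) * j + a : ℤ) : ℝ) ^ 2) / (4 * (k : ℝ))))
          = ∑' j : ℤ, q ^ ((((2 * (k : ℤ) * j + b : ℤ) : ℝ) ^ 2) / (4 * (k : ℝ)))) ∧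
    -- the theta series of `Λ` equals the code sum of products of 1-dimensional theta series
    (∑' l : Λ, q ^ ((B l l : ℝ) / 2))
      = ∑' c : (Set.range (fun l : Λ => fun i => ((B l (x i) : ℤ) : ZMod (2 * k)))),
          ∏ i : Fin 24,
            ∑' j : ℤ, q ^ ((((2 * (k : ℤ) * j
                + ((((c : Fin 24 → ZMod (2 * k))) i).val : ℤ) : ℤ) : ℝ) ^ 2)
              / (4 * (k : ℝ))) := by
  have hn : ((2 * k : ℕ) : ℤ) = 2 * k := by push_cast; rfl
  have : NeZero (2 * k) := ⟨by omega⟩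
  have : Module.Finite ℤ Λ := Module.finite_of_finrank_pos (by omega)
  have hx : IsFrame B x (2 * k : ℕ) := by rw [hn]; exact hframe
  have hinj := hx.frameCoords_injective (by omega) hsymm hpos (by simp [hrank])
  set θ : ℤ → ℝ := fun t => q ^ ((t : ℝ) ^ 2 / (4 * k))
  have hsum : ∀ a : ℤ, Summable fun j : ℤ => θ (2 * k * j + a) := fun a =>
    (summable_rpow_intCast_sq_div hq0 hq1 (by positivity)).comp_injective
      fun i j h => by simpa [hk.ne'] using h
  have hlift (c : ZMod (2 * k)) (a b : ℤ) (ha : (a : ZMod (2 * k)) = c)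
      (hb : (b : ZMod (2 * k)) = c) : ∑' j, θ (2 * k * j + a) = ∑' j, θ (2 * k * j + b) :=
    tsum_comp_mul_add_of_modEq θ (hn ▸ (ZMod.intCast_eq_intCast_iff a b _).mp (ha.trans hb.symm))
  have hterm (l : Λ) : q ^ ((B l l : ℝ) / 2) = ∏ i, θ (B l (x i)) := by
    rw [hx.rpow_div_two_apply_self hq0 (by omega) hinj hsymm l]
    congr! 3
    push_cast
    ring
  have hθ := hx.hasSum_prod_apply hinj (fun _ => θ) (fun _ _ => by positivity)
    fun _ a => by simpa only [hn] using hsum a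
  simp only [← hterm, hn] at hθ
  exact ⟨hθ.summable, hsum, hlift, hθ.tsum_eq⟩

/-- Let `k ≥ 1`, `Λ` a positive-definite even unimodular lattice of rank 24 without roots,
and `x₁, …, x₂₄` a `2k`-frame of `Λ` with associated code `C(S)`.  Then for `0 < q < 1`,
the theta series of `Λ` equals the sum, over codewords `c ∈ C(S)`, of the product over the
24 coordinates of the one-dimensional theta series `∑_{j∈ℤ} q^{(2kj+c̃ᵢ)²/(4k)}`; all sums
converge absolutely and the inner sums do not depend on the choice of integer lifts. -/
theorem theta_series_eq_code_sum (k : ℕ) (hk : 0 < k)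
    (Λ : Type) [AddCommGroup Λ] [Module ℤ Λ]
    (hfree : Module.Free ℤ Λ) (hrank : Module.finrank ℤ Λ = 24)
    (B : Λ →ₗ[ℤ] Λ →ₗ[ℤ] ℤ)
    (hsymm : ∀ a b : Λ, B a b = B b a)
    (hpos : ∀ a : Λ, a ≠ 0 → 0 < B a a)
    (heven : ∀ a : Λ, Even (B a a))
    (hunimod : Function.Bijective fun a : Λ => B a)
    (hnoroots : ∀ a : Λ, B a a ≠ 2)
    (x : Fin 24 → Λ)
    (hframe : ∀ i j, B (x i) (x j) = if i = j then (2 * (k : ℤ)) else 0)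
    (q : ℝ) (hq0 : 0 < q) (hq1 : q < 1) :
    -- the theta series of `Λ` converges absolutely
    Summable (fun l : Λ => q ^ ((B l l : ℝ) / 2)) ∧
    -- each one-dimensional theta series converges absolutely
    (∀ a : ℤ, Summable (fun j : ℤ =>
        q ^ ((((2 * (k : ℤ) * j + a : ℤ) : ℝ) ^ 2) / (4 * (k : ℝ))))) ∧
    -- the one-dimensional theta series do not depend on the choice of integer lift
    (∀ (m : ZMod (2 * k)) (a b : ℤ), (a : ZMod (2 * k)) = m → (b : ZMod (2 * k)) = m →
        (∑' j : ℤ, q ^ ((((2 * (k : ℤ) * j + a : ℤ) : ℝ) ^ 2) / (4 * (k : ℝ))))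
          = ∑' j : ℤ, q ^ ((((2 * (k : ℤ) * j + b : ℤ) : ℝ) ^ 2) / (4 * (k : ℝ)))) ∧
    -- the theta series of `Λ` equals the code sum of products of 1-dimensional theta series
    (∑' l : Λ, q ^ ((B l l : ℝ) / 2))
      = ∑' c : (Set.range (fun l : Λ => fun i => ((B l (x i) : ℤ) : ZMod (2 * k)))),
          ∏ i : Fin 24,
            ∑' j : ℤ, q ^ ((((2 * (k : ℤ) * j
                + ((((c : Fin 24 → ZMod (2 * k))) i).val : ℤ) : ℤ) : ℝ) ^ 2)
              / (4 * (k : ℝ))) :=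
  theta_series_eq_code_sum_general k hk Λ hfree hrank B hsymm hpos x hframe q hq0 hq1
end
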